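/- (Theorem 1, first bound.) In the smoothing spline truncation setting with Hilbert-space expansions, ‖f̃₀ − f̂₀‖² ≤ ζ₂ ‖Σ̃ − Σ‖_F². -/

import Mathlib

open Matrix BigOperators

/-- Squared Frobenius norm of a real matrix. -/
noncomputable def frobSq {m n : ℕ} (M : Matrix (Fin m) (Fin n) ℝ) : ℝ :=
  ∑ i, ∑ j, (M i j) ^ 2

/-- Squared Euclidean norm of a real vector. -/
noncomputable def vnormSq {m : ℕ} (v : Fin m → ℝ) : ℝ := ∑ i, (v i) ^ 2

/-!
Since `Tᵀ c = Tᵀ c̃ = 0`, both `c` and `c̃` lie in the range of `Q₂`, say `c = Q₂ a`, `c̃ = Q₂ ã`,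
and the reduced systems `(Q₂ᵀ Σ Q₂ + nλ) a = Q₂ᵀ y = (Q₂ᵀ Σ̃ Q₂ + nλ) ã` give
`(Q₂ᵀ Σ Q₂ + nλ)(a - ã) = Q₂ᵀ (Σ̃ - Σ) Q₂ ã`. Coercivity of both systems then bounds
`‖c - c̃‖²` by `B B̃ ‖Q₂‖_F⁴ ‖Q₂ᵀ y‖² ‖Σ̃ - Σ‖_F²`.

Subtracting the two spline equations, `T (d̃ - d)` differs from `z = Σ c - Σ̃ c̃` by a vector killed
by `Tᵀ`, so `d̃ - d = (TᵀT)⁻¹ Tᵀ z` and `‖d̃ - d‖² = zᵀ A z ≤ λ_max(A) ‖z‖²`. Finally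
`z = (Σ - Σ̃) c + Σ̃ (c - c̃)`, and `‖Q₂‖_F² = n - p` is a natural number, so `‖Q₂‖_F⁴ ≤ ‖Q₂‖_F⁶`.
-/

section Norms

variable {a b c : ℕ}

lemma vnormSq_nonneg (v : Fin a → ℝ) : 0 ≤ vnormSq v :=
  Finset.sum_nonneg fun _ _ => sq_nonneg _

lemma frobSq_nonneg (M : Matrix (Fin a) (Fin b) ℝ) : 0 ≤ frobSq M :=
  Finset.sum_nonneg fun _ _ => Finset.sum_nonneg fun _ _ => sq_nonneg _

lemma vnormSq_eq_dotProduct (v : Fin a → ℝ) : vnormSq v = v ⬝ᵥ v := by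
  simp [vnormSq, dotProduct, pow_two]

lemma vnormSq_mulVec (M : Matrix (Fin a) (Fin b) ℝ) (x : Fin b → ℝ) :
    vnormSq (M *ᵥ x) = x ⬝ᵥ ((Mᵀ * M) *ᵥ x) := by
  rw [vnormSq_eq_dotProduct, ← mulVec_mulVec, dotProduct_mulVec, ← mulVec_transpose,
    dotProduct_comm]

lemma vnormSq_mulVec_of_transpose_mul_self_eq_one {Q : Matrix (Fin a) (Fin b) ℝ}
    (hQ : Qᵀ * Q = 1) (x : Fin b → ℝ) : vnormSq (Q *ᵥ x) = vnormSq x := by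
  rw [vnormSq_mulVec, hQ, one_mulVec, vnormSq_eq_dotProduct]

lemma frobSq_eq_of_transpose_mul_self_eq_one {Q : Matrix (Fin a) (Fin b) ℝ} (hQ : Qᵀ * Q = 1) :
    frobSq Q = b := by
  have htrace := congrArg trace hQ
  rw [trace_one, Fintype.card_fin] at htrace
  simp only [trace, diag, mul_apply, transpose_apply] at htrace
  rw [frobSq, Finset.sum_comm, ← htrace]
  simp [pow_two]

lemma sq_dotProduct_le (x w : Fin a → ℝ) : (x ⬝ᵥ w) ^ 2 ≤ vnormSq x * vnormSq w := by
  simpa [dotProduct, vnormSq] using Finset.sum_mul_sq_le_sq_mul_sq Finset.univ x w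

lemma vnormSq_mulVec_le (M : Matrix (Fin a) (Fin b) ℝ) (x : Fin b → ℝ) :
    vnormSq (M *ᵥ x) ≤ frobSq M * vnormSq x := by
  rw [vnormSq, frobSq, Finset.sum_mul]
  refine Finset.sum_le_sum fun i _ => ?_
  simpa [mulVec, dotProduct, vnormSq] using sq_dotProduct_le (fun j => M i j) x

lemma frobSq_mul_le (M : Matrix (Fin a) (Fin b) ℝ) (N : Matrix (Fin b) (Fin c) ℝ) :
    frobSq (M * N) ≤ frobSq M * frobSq N := by
  rw [frobSq, frobSq, Finset.sum_mul]
  refine Finset.sum_le_sum fun i _ => ?_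
  calc ∑ j, ((M * N) i j) ^ 2 ≤ ∑ j, (∑ k, M i k ^ 2) * ∑ k, N k j ^ 2 := by
        refine Finset.sum_le_sum fun j _ => ?_
        simpa [mul_apply] using
          Finset.sum_mul_sq_le_sq_mul_sq Finset.univ (fun k => M i k) (fun k => N k j)
    _ = (∑ j, M i j ^ 2) * frobSq N := by rw [← Finset.mul_sum, frobSq, Finset.sum_comm]

lemma frobSq_transpose (M : Matrix (Fin a) (Fin b) ℝ) : frobSq Mᵀ = frobSq M := by
  rw [frobSq, frobSq, Finset.sum_comm]
  rfl

lemma frobSq_transpose_mul_mul_le (Q : Matrix (Fin a) (Fin b) ℝ) (X : Matrix (Fin a) (Fin a) ℝ) :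
    frobSq (Qᵀ * X * Q) ≤ frobSq Q ^ 2 * frobSq X :=
  calc frobSq (Qᵀ * X * Q) ≤ frobSq Qᵀ * frobSq X * frobSq Q :=
        (frobSq_mul_le _ _).trans <|
          mul_le_mul_of_nonneg_right (frobSq_mul_le _ _) (frobSq_nonneg _)
    _ = frobSq Q ^ 2 * frobSq X := by rw [frobSq_transpose]; ring

lemma frobSq_sub_comm (M N : Matrix (Fin a) (Fin b) ℝ) : frobSq (M - N) = frobSq (N - M) := by
  simp only [frobSq, Matrix.sub_apply]
  exact Finset.sum_congr rfl fun i _ => Finset.sum_congr rfl fun j _ => by ring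

lemma vnormSq_add_le (u w : Fin a → ℝ) : vnormSq (u + w) ≤ 2 * vnormSq u + 2 * vnormSq w := by
  simp only [vnormSq, Finset.mul_sum, ← Finset.sum_add_distrib, Pi.add_apply]
  exact Finset.sum_le_sum fun i _ => by nlinarith [sq_nonneg (u i - w i)]

lemma vnormSq_mulVec_sub_mulVec_le (S S' : Matrix (Fin a) (Fin a) ℝ) (x x' : Fin a → ℝ) :
    vnormSq (S *ᵥ x - S' *ᵥ x') ≤
      2 * (frobSq (S' - S) * vnormSq x) + 2 * (frobSq S' * vnormSq (x - x')) := by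
  have hsplit : S *ᵥ x - S' *ᵥ x' = (S - S') *ᵥ x + S' *ᵥ (x - x') := by
    rw [sub_mulVec, mulVec_sub]
    abel
  rw [hsplit, ← frobSq_sub_comm]
  refine (vnormSq_add_le _ _).trans ?_
  gcongr <;> exact vnormSq_mulVec_le _ _

lemma frobSq_sq_le_pow_three_of_transpose_mul_self_eq_one {Q : Matrix (Fin a) (Fin b) ℝ}
    (hQ : Qᵀ * Q = 1) : frobSq Q ^ 2 ≤ frobSq Q ^ 3 := by
  rw [frobSq_eq_of_transpose_mul_self_eq_one hQ]
  norm_cast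
  rcases Nat.eq_zero_or_pos b with hb | hb
  · simp [hb]
  · exact Nat.pow_le_pow_right hb (by norm_num)

end Norms

lemma Orthonormal.norm_sum_smul_sub_sum_smul_sq {H : Type*} [NormedAddCommGroup H]
    [InnerProductSpace ℝ H] {p : ℕ} {v : Fin p → H} (hv : Orthonormal ℝ v) (l l' : Fin p → ℝ) :
    ‖∑ i, l i • v i - ∑ i, l' i • v i‖ ^ 2 = vnormSq (l - l') := by
  rw [← Finset.sum_sub_distrib, ← real_inner_self_eq_norm_sq]
  simp_rw [← sub_smul]
  rw [hv.inner_sum (fun i => l i - l' i) (fun i => l i - l' i) Finset.univ]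
  simp [vnormSq, pow_two]

namespace Matrix

variable {m : ℕ} {A : Matrix (Fin m) (Fin m) ℝ}

lemma IsHermitian.exists_dotProduct_mulVec_eq_sum (hA : A.IsHermitian) (x : Fin m → ℝ) :
    ∃ u : Fin m → ℝ, x ⬝ᵥ (A *ᵥ x) = ∑ i, hA.eigenvalues i * u i ^ 2 ∧ vnormSq u = vnormSq x := by
  set V : Matrix (Fin m) (Fin m) ℝ := ↑hA.eigenvectorUnitary
  have hVstar : star V = Vᵀ := by
    rw [star_eq_conjTranspose, conjTranspose_eq_transpose_of_trivial]
  have hVVt : V * Vᵀ = 1 := by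
    rw [← hVstar]
    exact mem_unitaryGroup_iff.mp hA.eigenvectorUnitary.2
  refine ⟨Vᵀ *ᵥ x, ?_, ?_⟩
  · conv_lhs => rw [hA.spectral_theorem, Unitary.conjStarAlgAut_apply, hVstar,
      ← mulVec_mulVec, ← mulVec_mulVec, dotProduct_mulVec, ← mulVec_transpose]
    simp [dotProduct, mulVec_diagonal]
    exact Finset.sum_congr rfl fun i _ => by ring
  · rw [vnormSq_mulVec, transpose_transpose, hVVt, one_mulVec, vnormSq_eq_dotProduct]

lemma IsHermitian.dotProduct_mulVec_le (hA : A.IsHermitian) {μ : ℝ}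
    (h : ∀ i, hA.eigenvalues i ≤ μ) (x : Fin m → ℝ) : x ⬝ᵥ (A *ᵥ x) ≤ μ * vnormSq x := by
  obtain ⟨u, hxu, hnorm⟩ := hA.exists_dotProduct_mulVec_eq_sum x
  rw [hxu, ← hnorm, vnormSq, Finset.mul_sum]
  exact Finset.sum_le_sum fun i _ => mul_le_mul_of_nonneg_right (h i) (sq_nonneg _)

lemma IsHermitian.le_dotProduct_mulVec (hA : A.IsHermitian) {μ : ℝ}
    (h : ∀ i, μ ≤ hA.eigenvalues i) (x : Fin m → ℝ) : μ * vnormSq x ≤ x ⬝ᵥ (A *ᵥ x) := by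
  obtain ⟨u, hxu, hnorm⟩ := hA.exists_dotProduct_mulVec_eq_sum x
  rw [hxu, ← hnorm, vnormSq, Finset.mul_sum]
  exact Finset.sum_le_sum fun i _ => mul_le_mul_of_nonneg_right (h i) (sq_nonneg _)

lemma sq_mul_vnormSq_le_of_coercive {M : Matrix (Fin m) (Fin m) ℝ} {μ : ℝ} (hμ : 0 < μ)
    (hM : ∀ z, μ * vnormSq z ≤ z ⬝ᵥ (M *ᵥ z)) {x w : Fin m → ℝ} (hw : M *ᵥ x = w) :
    μ ^ 2 * vnormSq x ≤ vnormSq w := by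
  have hx := vnormSq_nonneg x
  have hxw : μ * vnormSq x ≤ x ⬝ᵥ w := hw ▸ hM x
  have hsq : (μ * vnormSq x) ^ 2 ≤ vnormSq x * vnormSq w :=
    (pow_le_pow_left₀ (by positivity) hxw 2).trans (sq_dotProduct_le x w)
  rcases hx.eq_or_lt with h0 | hpos
  · rw [← h0, mul_zero]
    exact vnormSq_nonneg w
  · nlinarith

lemma PosDef.vnormSq_le_of_add_smul_one_mulVec_eq (hA : A.PosDef) {s : ℝ} (hs : 0 ≤ s)
    {x w : Fin m → ℝ} (h : (A + s • 1) *ᵥ x = w) :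
    vnormSq x ≤ (∑ k, (hA.1.eigenvalues k ^ 2)⁻¹) * vnormSq w := by
  rcases isEmpty_or_nonempty (Fin m) with _ | _
  · simp [vnormSq]
  obtain ⟨i, hi⟩ := Finite.exists_min hA.1.eigenvalues
  have hμ : 0 < hA.1.eigenvalues i := hA.eigenvalues_pos i
  have hcoercive : ∀ z, hA.1.eigenvalues i * vnormSq z ≤ z ⬝ᵥ ((A + s • 1) *ᵥ z) := fun z => by
    rw [add_mulVec, smul_mulVec, one_mulVec, dotProduct_add, dotProduct_smul,
      ← vnormSq_eq_dotProduct]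
    linarith [hA.1.le_dotProduct_mulVec hi z, smul_nonneg hs (vnormSq_nonneg z)]
  have hx := sq_mul_vnormSq_le_of_coercive hμ hcoercive h
  have hB : (hA.1.eigenvalues i ^ 2)⁻¹ ≤ ∑ k, (hA.1.eigenvalues k ^ 2)⁻¹ :=
    Finset.single_le_sum (f := fun k => (hA.1.eigenvalues k ^ 2)⁻¹)
      (fun k _ => by positivity) (Finset.mem_univ i)
  calc vnormSq x ≤ (hA.1.eigenvalues i ^ 2)⁻¹ * vnormSq w := by
        rw [inv_mul_eq_div, le_div_iff₀ (by positivity), mul_comm]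
        exact hx
    _ ≤ _ := mul_le_mul_of_nonneg_right hB (vnormSq_nonneg w)

lemma PosDef.vnormSq_sub_le_of_add_smul_one_mulVec_eq {A' : Matrix (Fin m) (Fin m) ℝ}
    (hA : A.PosDef) (hA' : A'.PosDef) {s : ℝ} (hs : 0 ≤ s) {x x' w : Fin m → ℝ}
    (hx : (A + s • 1) *ᵥ x = w) (hx' : (A' + s • 1) *ᵥ x' = w) :
    vnormSq (x - x') ≤ (∑ k, (hA.1.eigenvalues k ^ 2)⁻¹) * frobSq (A' - A) *
      (∑ k, (hA'.1.eigenvalues k ^ 2)⁻¹) * vnormSq w := by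
  have hdiff : (A + s • 1) *ᵥ (x - x') = (A' - A) *ᵥ x' := by
    rw [mulVec_sub, hx, ← hx', sub_mulVec, add_mulVec, add_mulVec]
    abel
  calc vnormSq (x - x') ≤ (∑ k, (hA.1.eigenvalues k ^ 2)⁻¹) * vnormSq ((A' - A) *ᵥ x') :=
        hA.vnormSq_le_of_add_smul_one_mulVec_eq hs hdiff
    _ ≤ (∑ k, (hA.1.eigenvalues k ^ 2)⁻¹) * (frobSq (A' - A) *
          ((∑ k, (hA'.1.eigenvalues k ^ 2)⁻¹) * vnormSq w)) := by
        gcongr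
        exact (vnormSq_mulVec_le _ _).trans <| mul_le_mul_of_nonneg_left
          (hA'.vnormSq_le_of_add_smul_one_mulVec_eq hs hx') (frobSq_nonneg _)
    _ = _ := by ring

end Matrix

section SplineSystem

variable {n p q : ℕ} {T Q₁ : Matrix (Fin n) (Fin p) ℝ} {Q₂ : Matrix (Fin n) (Fin q) ℝ}

lemma transpose_mulVec_eq_zero_of_eq_mul {R : Matrix (Fin p) (Fin p) ℝ} (hR : IsUnit R)
    (hT : T = Q₁ * R) {u : Fin n → ℝ} (hu : Tᵀ *ᵥ u = 0) : Q₁ᵀ *ᵥ u = 0 := by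
  have hRt : IsUnit Rᵀ.det := by rwa [det_transpose, ← isUnit_iff_isUnit_det]
  have hRQ : Rᵀ *ᵥ (Q₁ᵀ *ᵥ u) = 0 := by rw [mulVec_mulVec, ← transpose_mul, ← hT, hu]
  rw [← one_mulVec (Q₁ᵀ *ᵥ u), ← nonsing_inv_mul _ hRt, ← mulVec_mulVec, hRQ, mulVec_zero]

lemma mulVec_transpose_mulVec_eq_self (hQ : Q₁ * Q₁ᵀ + Q₂ * Q₂ᵀ = 1) {u : Fin n → ℝ}
    (hu : Q₁ᵀ *ᵥ u = 0) : Q₂ *ᵥ (Q₂ᵀ *ᵥ u) = u := by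
  conv_rhs => rw [← one_mulVec u, ← hQ, add_mulVec, ← mulVec_mulVec, hu, mulVec_zero, zero_add,
    ← mulVec_mulVec]

lemma reduced_system_mulVec_eq (hQ₂T : Q₂ᵀ * T = 0) {X : Matrix (Fin n) (Fin n) ℝ} {s : ℝ}
    {u y : Fin n → ℝ} {e : Fin p → ℝ} (hu : Q₂ *ᵥ (Q₂ᵀ *ᵥ u) = u)
    (h : T *ᵥ e + (X + s • 1) *ᵥ u = y) :
    (Q₂ᵀ * X * Q₂ + s • 1) *ᵥ (Q₂ᵀ *ᵥ u) = Q₂ᵀ *ᵥ y := by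
  have hTe : Q₂ᵀ *ᵥ (T *ᵥ e) = 0 := by rw [mulVec_mulVec, hQ₂T, zero_mulVec]
  rw [← h, mulVec_add, hTe, zero_add]
  simp only [add_mulVec, smul_mulVec, one_mulVec, mulVec_add, mulVec_smul, ← mulVec_mulVec, hu]

lemma isUnit_det_transpose_mul_self {R : Matrix (Fin p) (Fin p) ℝ} (hQ₁ : Q₁ᵀ * Q₁ = 1)
    (hR : IsUnit R) (hT : T = Q₁ * R) : IsUnit (Tᵀ * T).det := by
  have hTT : Tᵀ * T = Rᵀ * R := by
    rw [hT, transpose_mul, Matrix.mul_assoc, ← Matrix.mul_assoc Q₁ᵀ, hQ₁, Matrix.one_mul]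
  have hRd := (isUnit_iff_isUnit_det R).mp hR
  rw [hTT, det_mul, det_transpose]
  exact hRd.mul hRd

lemma mul_inv_mul_inv_mul_transpose_eq (T : Matrix (Fin n) (Fin p) ℝ) :
    T * ((Tᵀ * T)⁻¹ * (Tᵀ * T)⁻¹) * Tᵀ = ((Tᵀ * T)⁻¹ * Tᵀ)ᵀ * ((Tᵀ * T)⁻¹ * Tᵀ) := by
  rw [transpose_mul, transpose_transpose, transpose_nonsing_inv, transpose_mul,
    transpose_transpose]
  simp only [Matrix.mul_assoc]

lemma iSup_eigenvalues_mul_inv_mul_inv_mul_transpose_nonneg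
    (hA : (T * ((Tᵀ * T)⁻¹ * (Tᵀ * T)⁻¹) * Tᵀ).IsHermitian) : 0 ≤ ⨆ i, hA.eigenvalues i := by
  have hpsd := posSemidef_conjTranspose_mul_self ((Tᵀ * T)⁻¹ * Tᵀ)
  rw [conjTranspose_eq_transpose_of_trivial, ← mul_inv_mul_inv_mul_transpose_eq] at hpsd
  exact Real.iSup_nonneg hpsd.eigenvalues_nonneg

lemma vnormSq_le_iSup_eigenvalues_mul (hG : IsUnit (Tᵀ * T).det)
    (hA : (T * ((Tᵀ * T)⁻¹ * (Tᵀ * T)⁻¹) * Tᵀ).IsHermitian) {e : Fin p → ℝ} {z : Fin n → ℝ}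
    (h : Tᵀ *ᵥ (T *ᵥ e) = Tᵀ *ᵥ z) : vnormSq e ≤ (⨆ i, hA.eigenvalues i) * vnormSq z := by
  have he : e = ((Tᵀ * T)⁻¹ * Tᵀ) *ᵥ z := by
    rw [← mulVec_mulVec, ← h, mulVec_mulVec, mulVec_mulVec, Matrix.mul_assoc,
      nonsing_inv_mul _ hG, one_mulVec]
  rw [he, vnormSq_mulVec, ← mul_inv_mul_inv_mul_transpose_eq]
  exact hA.dotProduct_mulVec_le
    (fun i => le_ciSup (Set.finite_range _).bddAbove i) z

lemma transpose_mulVec_mulVec_sub_eq {S S' : Matrix (Fin n) (Fin n) ℝ} {s : ℝ}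
    {y c c' : Fin n → ℝ} {d d' : Fin p → ℝ}
    (hcd : T *ᵥ d + (S + s • 1) *ᵥ c = y) (hc : Tᵀ *ᵥ c = 0)
    (hcd' : T *ᵥ d' + (S' + s • 1) *ᵥ c' = y) (hc' : Tᵀ *ᵥ c' = 0) :
    Tᵀ *ᵥ (T *ᵥ (d' - d)) = Tᵀ *ᵥ (S *ᵥ c - S' *ᵥ c') := by
  have hTd : T *ᵥ (d' - d) = (S + s • 1) *ᵥ c - (S' + s • 1) *ᵥ c' := by
    rw [mulVec_sub, sub_eq_sub_iff_add_eq_add, hcd', add_comm _ (T *ᵥ d), hcd]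
  simp only [hTd, add_mulVec, smul_mulVec, one_mulVec, mulVec_sub, mulVec_add, mulVec_smul, hc,
    hc', smul_zero, add_zero]

lemma vnormSq_sub_le_of_spline_systems (hQ₂ : Q₂ᵀ * Q₂ = 1) (hQ₂T : Q₂ᵀ * T = 0)
    {S S' : Matrix (Fin n) (Fin n) ℝ} (hS : (Q₂ᵀ * S * Q₂).PosDef) (hS' : (Q₂ᵀ * S' * Q₂).PosDef)
    {s : ℝ} (hs : 0 ≤ s) {y c c' : Fin n → ℝ} {d d' : Fin p → ℝ}
    (hc : Q₂ *ᵥ (Q₂ᵀ *ᵥ c) = c) (hc' : Q₂ *ᵥ (Q₂ᵀ *ᵥ c') = c')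
    (hcd : T *ᵥ d + (S + s • 1) *ᵥ c = y) (hcd' : T *ᵥ d' + (S' + s • 1) *ᵥ c' = y) :
    vnormSq (c - c') ≤ (∑ k, (hS.1.eigenvalues k ^ 2)⁻¹) * (frobSq Q₂ ^ 2 * frobSq (S' - S)) *
      (∑ k, (hS'.1.eigenvalues k ^ 2)⁻¹) * vnormSq (Q₂ᵀ *ᵥ y) := by
  rw [← hc, ← hc', ← mulVec_sub, vnormSq_mulVec_of_transpose_mul_self_eq_one hQ₂]
  refine (hS.vnormSq_sub_le_of_add_smul_one_mulVec_eq hS' hs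
    (reduced_system_mulVec_eq hQ₂T hc hcd) (reduced_system_mulVec_eq hQ₂T hc' hcd')).trans ?_
  rw [← Matrix.sub_mul, ← Matrix.mul_sub]
  gcongr
  · exact vnormSq_nonneg _
  · exact frobSq_transpose_mul_mul_le Q₂ (S' - S)

end SplineSystem

theorem stmt9_general
    (n p : ℕ)
    (y : Fin n → ℝ) (lam : ℝ) (hlam : 0 < lam)
    (T Q₁ : Matrix (Fin n) (Fin p) ℝ) (Q₂ : Matrix (Fin n) (Fin (n - p)) ℝ)
    (R : Matrix (Fin p) (Fin p) ℝ)
    (hQ₁ : Q₁ᵀ * Q₁ = 1) (hQ₂ : Q₂ᵀ * Q₂ = 1) (hQ₁₂ : Q₁ᵀ * Q₂ = 0)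
    (hQ : Q₁ * Q₁ᵀ + Q₂ * Q₂ᵀ = 1)
    (hR : IsUnit R) (hT : T = Q₁ * R)
    (S St : Matrix (Fin n) (Fin n) ℝ)
    (hpd : (Q₂ᵀ * S * Q₂).PosDef) (hpdt : (Q₂ᵀ * St * Q₂).PosDef)
    (hA : (T * ((Tᵀ * T)⁻¹ * (Tᵀ * T)⁻¹) * Tᵀ).IsHermitian)
    (c : Fin n → ℝ) (d : Fin p → ℝ)
    (hcd : T *ᵥ d + (S + ((n : ℝ) * lam) • 1) *ᵥ c = y) (hc0 : Tᵀ *ᵥ c = 0)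
    (ct : Fin n → ℝ) (dt : Fin p → ℝ)
    (hcdt : T *ᵥ dt + (St + ((n : ℝ) * lam) • 1) *ᵥ ct = y) (hct0 : Tᵀ *ᵥ ct = 0)
    {H : Type*} [NormedAddCommGroup H] [InnerProductSpace ℝ H]
    (φ : Fin p → H) (hφ : Orthonormal ℝ φ) :
    ‖(∑ ν, dt ν • φ ν) - (∑ ν, d ν • φ ν)‖ ^ 2 ≤
      (2 * (⨆ i, hA.eigenvalues i) *
        (((frobSq Q₂) ^ 3 * vnormSq (Q₂ᵀ *ᵥ y)) *
          (∑ k, ((hpd.1.eigenvalues k) ^ 2)⁻¹) *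
          (∑ k, ((hpdt.1.eigenvalues k) ^ 2)⁻¹) *
          frobSq St + vnormSq c)) * frobSq (St - S) := by
  have hs : 0 ≤ (n : ℝ) * lam := by positivity
  have hc := mulVec_transpose_mulVec_eq_self hQ (transpose_mulVec_eq_zero_of_eq_mul hR hT hc0)
  have hct := mulVec_transpose_mulVec_eq_self hQ (transpose_mulVec_eq_zero_of_eq_mul hR hT hct0)
  have hQ₂T : Q₂ᵀ * T = 0 := by
    rw [hT, ← Matrix.mul_assoc, ← transpose_transpose Q₁, ← transpose_mul, hQ₁₂, transpose_zero,
      Matrix.zero_mul]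
  have hcoef := vnormSq_sub_le_of_spline_systems hQ₂ hQ₂T hpd hpdt hs hc hct hcd hcdt
  have hd := vnormSq_le_iSup_eigenvalues_mul (isUnit_det_transpose_mul_self hQ₁ hR hT) hA
    (transpose_mulVec_mulVec_sub_eq hcd hc0 hcdt hct0)
  have hΛ := iSup_eigenvalues_mul_inv_mul_inv_mul_transpose_nonneg hA
  set Λ := ⨆ i, hA.eigenvalues i
  set B := ∑ k, ((hpd.1.eigenvalues k) ^ 2)⁻¹
  set B' := ∑ k, ((hpdt.1.eigenvalues k) ^ 2)⁻¹
  rw [hφ.norm_sum_smul_sub_sum_smul_sq]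
  calc vnormSq (dt - d) ≤ Λ * vnormSq (S *ᵥ c - St *ᵥ ct) := hd
    _ ≤ Λ * (2 * (frobSq (St - S) * vnormSq c) +
          2 * (frobSq St * (B * (frobSq Q₂ ^ 3 * frobSq (St - S)) * B' * vnormSq (Q₂ᵀ *ᵥ y)))) := by
        gcongr
        refine (vnormSq_mulVec_sub_mulVec_le S St c ct).trans ?_
        gcongr
        · exact frobSq_nonneg St
        refine hcoef.trans ?_
        gcongr _ * (?_ * _) * _ * _
        · exact vnormSq_nonneg _
        · exact frobSq_nonneg _
        · exact frobSq_sq_le_pow_three_of_transpose_mul_self_eq_one hQ₂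
    _ = _ := by ring

/-- Theorem 1, first bound: in the smoothing spline truncation setting with
Hilbert-space expansions, `‖f̃₀ − f̂₀‖² ≤ ζ₂ ‖Σ̃ − Σ‖_F²`. -/
theorem stmt9
    (n p : ℕ) (hp : 1 ≤ p) (hpn : p < n)
    (y : Fin n → ℝ) (lam : ℝ) (hlam : 0 < lam)
    (T Q₁ : Matrix (Fin n) (Fin p) ℝ) (Q₂ : Matrix (Fin n) (Fin (n - p)) ℝ)
    (R : Matrix (Fin p) (Fin p) ℝ)
    (hQ₁ : Q₁ᵀ * Q₁ = 1) (hQ₂ : Q₂ᵀ * Q₂ = 1) (hQ₁₂ : Q₁ᵀ * Q₂ = 0)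
    (hQ : Q₁ * Q₁ᵀ + Q₂ * Q₂ᵀ = 1)
    (hR : IsUnit R) (hRtri : R.BlockTriangular id) (hT : T = Q₁ * R)
    (K : ℕ) (hK : 1 ≤ K) (κ : ℝ) (hκ : 0 < κ)
    (δ : ℕ → ℝ) (hδ0 : ∀ k, 0 ≤ δ k) (hδmono : ∀ k, δ (k + 1) ≤ δ k) (hδsum : Summable δ)
    (U : Fin n → ℕ → ℝ) (hU : ∀ i k, |U i k| ≤ κ)
    (S St : Matrix (Fin n) (Fin n) ℝ)
    (hS : ∀ i j, S i j = ∑' k, δ k * U i k * U j k)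
    (hSt : ∀ i j, St i j = ∑ k ∈ Finset.range K, δ k * U i k * U j k)
    (hSpsd : S.PosSemidef) (hStpsd : St.PosSemidef)
    (hpd : (Q₂ᵀ * S * Q₂).PosDef) (hpdt : (Q₂ᵀ * St * Q₂).PosDef)
    (hA : (T * ((Tᵀ * T)⁻¹ * (Tᵀ * T)⁻¹) * Tᵀ).IsHermitian)
    (c : Fin n → ℝ) (d : Fin p → ℝ)
    (hcd : T *ᵥ d + (S + ((n : ℝ) * lam) • 1) *ᵥ c = y) (hc0 : Tᵀ *ᵥ c = 0)
    (ct : Fin n → ℝ) (dt : Fin p → ℝ)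
    (hcdt : T *ᵥ dt + (St + ((n : ℝ) * lam) • 1) *ᵥ ct = y) (hct0 : Tᵀ *ᵥ ct = 0)
    {H : Type*} [NormedAddCommGroup H] [InnerProductSpace ℝ H] [CompleteSpace H]
    (φ : Fin p → H) (Φ : ℕ → H) (hφ : Orthonormal ℝ φ) (hΦ : Orthonormal ℝ Φ) :
    ‖(∑ ν, dt ν • φ ν) - (∑ ν, d ν • φ ν)‖ ^ 2 ≤
      (2 * (⨆ i, hA.eigenvalues i) *
        (((frobSq Q₂) ^ 3 * vnormSq (Q₂ᵀ *ᵥ y)) *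
          (∑ k, ((hpd.1.eigenvalues k) ^ 2)⁻¹) *
          (∑ k, ((hpdt.1.eigenvalues k) ^ 2)⁻¹) *
          frobSq St + vnormSq c)) * frobSq (St - S) :=
  stmt9_general n p y lam hlam T Q₁ Q₂ R hQ₁ hQ₂ hQ₁₂ hQ hR hT S St hpd hpdt hA c d hcd hc0 ct dt
    hcdt hct0 φ hφ
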